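/- Let 𝕊 be a nonempty finite set with m elements and 𝕍 a nonempty finite set. Let S ∈ 𝕊, V ∈ 𝕍, S̃ ∈ 𝕊, and M ∈ {0,1} be jointly distributed finitely-valued random variables such that (S, V), S̃, and M are mutually independent, S̃ is uniformly distributed on 𝕊, and P(M = 1) = P(M = 0) = 1/2. Define S̄ := S on the event {M = 1} and S̄ := S̃ on the event {M = 0}. Then for every (s, v) with P(S = s, V = v) > 0, the conditional probabilities P(M = 1 | S̄ = s, V = v) and P(M = 0 | S̄ = s, V = v) are well-defined and lie in (0,1), and the likelihood ratio satisfies log( P(S = s, V = v) / ( (1/m) · P(V = v) ) ) = log( P(M = 1 | S̄ = s, V = v) / P(M = 0 | S̄ = s, V = v) ). -/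

import Mathlib

/-!
On the event `M = 1` the pair `(S̄, V)` is `(S, V)`, and on `M = 0` it is `(S̃, V)` with `S̃`
uniform and independent of `V`. Hence the joint weights of the two classes with `(S̄, V) = (s, v)`
are `½ · P(S = s, V = v)` and `½ · (1/m) · P(V = v)`; the posterior odds of `M = 1` against
`M = 0` are their ratio, in which the prior `½` cancels.
-/

open scoped BigOperators Classical

noncomputable section

namespace NCS

/-- Probability of an event under a pmf `P` on a finite sample space. -/
def pr {Ω : Type} [Fintype Ω] (P : Ω → ℝ) (E : Ω → Prop) : ℝ :=
  ∑ ω, if E ω then P ω else 0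

/-- Conditional probability `P(E | F)`, as a ratio of probabilities. -/
def condPr {Ω : Type} [Fintype Ω] (P : Ω → ℝ) (E F : Ω → Prop) : ℝ :=
  pr P (fun ω => E ω ∧ F ω) / pr P F

section Pr

variable {Ω : Type} [Fintype Ω] (P : Ω → ℝ)

lemma pr_congr {E F : Ω → Prop} (h : ∀ ω, E ω ↔ F ω) : pr P E = pr P F := by
  simp only [pr, h]

lemma pr_mono (hP : ∀ ω, 0 ≤ P ω) {E F : Ω → Prop} (h : ∀ ω, E ω → F ω) :
    pr P E ≤ pr P F := by
  refine Finset.sum_le_sum fun ω _ => ?_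
  by_cases hE : E ω
  · simp [hE, h ω hE]
  · by_cases hF : F ω <;> simp [hE, hF, hP ω]

lemma pr_eq_sum_fiber {α : Type} [Fintype α] (E : Ω → Prop) (f : Ω → α) :
    pr P E = ∑ a, pr P (fun ω => E ω ∧ f ω = a) := by
  unfold pr
  rw [Finset.sum_comm]
  refine Finset.sum_congr rfl fun ω _ => ?_
  by_cases h : E ω <;> simp [h]

lemma pr_eq_add_bool (M : Ω → Bool) (F : Ω → Prop) :
    pr P F = pr P (fun ω => M ω = true ∧ F ω) + pr P (fun ω => M ω = false ∧ F ω) := by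
  rw [pr_eq_sum_fiber P F M, Fintype.sum_bool]
  congr 1 <;> exact pr_congr P fun ω => and_comm

lemma condPr_mem_Ioo {E E' F : Ω → Prop}
    (hF : pr P F = pr P (fun ω => E ω ∧ F ω) + pr P (fun ω => E' ω ∧ F ω))
    (hE : 0 < pr P (fun ω => E ω ∧ F ω)) (hE' : 0 < pr P (fun ω => E' ω ∧ F ω)) :
    condPr P E F ∈ Set.Ioo 0 1 := by
  rw [condPr, hF]
  exact ⟨by positivity, (div_lt_one (by positivity)).2 (by linarith)⟩

lemma condPr_div_condPr (E E' F : Ω → Prop) (hF : pr P F ≠ 0) :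
    condPr P E F / condPr P E' F =
      pr P (fun ω => E ω ∧ F ω) / pr P (fun ω => E' ω ∧ F ω) :=
  div_div_div_cancel_right₀ hF _ _

end Pr

section Mixture

variable {Ω 𝕊 𝕍 : Type} [Fintype Ω] [Fintype 𝕊] (P : Ω → ℝ)
  (S : Ω → 𝕊) (V : Ω → 𝕍) (St : Ω → 𝕊) (M : Ω → Bool)

lemma pr_and_eq_mul_of_indep [Nonempty 𝕊]
    (hindep : ∀ (s : 𝕊) (v : 𝕍) (s' : 𝕊) (m : Bool),
      pr P (fun ω => S ω = s ∧ V ω = v ∧ St ω = s' ∧ M ω = m) =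
        pr P (fun ω => S ω = s ∧ V ω = v) * pr P (fun ω => St ω = s') *
          pr P (fun ω => M ω = m))
    (hunif : ∀ s' : 𝕊, pr P (fun ω => St ω = s') = 1 / (Fintype.card 𝕊 : ℝ))
    (s : 𝕊) (v : 𝕍) (b : Bool) :
    pr P (fun ω => M ω = b ∧ S ω = s ∧ V ω = v) =
      pr P (fun ω => S ω = s ∧ V ω = v) * pr P (fun ω => M ω = b) := by
  have hterm : ∀ s' : 𝕊, pr P (fun ω => (M ω = b ∧ S ω = s ∧ V ω = v) ∧ St ω = s') =
      pr P (fun ω => S ω = s ∧ V ω = v) * (1 / Fintype.card 𝕊) * pr P (fun ω => M ω = b) := by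
    intro s'
    rw [← hunif s', ← hindep]
    exact pr_congr P fun ω => by tauto
  have hcard : (Fintype.card 𝕊 : ℝ) ≠ 0 := Nat.cast_ne_zero.2 Fintype.card_ne_zero
  rw [pr_eq_sum_fiber P _ St, Finset.sum_congr rfl fun s' _ => hterm s', Finset.sum_const,
    Finset.card_univ, nsmul_eq_mul]
  field_simp

lemma pr_uniform_and_eq_mul_of_indep
    (hindep : ∀ (s : 𝕊) (v : 𝕍) (s' : 𝕊) (m : Bool),
      pr P (fun ω => S ω = s ∧ V ω = v ∧ St ω = s' ∧ M ω = m) =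
        pr P (fun ω => S ω = s ∧ V ω = v) * pr P (fun ω => St ω = s') *
          pr P (fun ω => M ω = m))
    (hunif : ∀ s' : 𝕊, pr P (fun ω => St ω = s') = 1 / (Fintype.card 𝕊 : ℝ))
    (s : 𝕊) (v : 𝕍) (b : Bool) :
    pr P (fun ω => M ω = b ∧ St ω = s ∧ V ω = v) =
      (1 / (Fintype.card 𝕊 : ℝ) * pr P (fun ω => V ω = v)) * pr P (fun ω => M ω = b) := by
  have hterm : ∀ s'' : 𝕊, pr P (fun ω => (M ω = b ∧ St ω = s ∧ V ω = v) ∧ S ω = s'') =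
      pr P (fun ω => S ω = s'' ∧ V ω = v) * (1 / Fintype.card 𝕊) * pr P (fun ω => M ω = b) := by
    intro s''
    rw [← hunif s, ← hindep]
    exact pr_congr P fun ω => by tauto
  have hV : pr P (fun ω => V ω = v) = ∑ s'' : 𝕊, pr P (fun ω => S ω = s'' ∧ V ω = v) := by
    rw [pr_eq_sum_fiber P _ S]
    exact Finset.sum_congr rfl fun s'' _ => pr_congr P fun ω => and_comm
  rw [pr_eq_sum_fiber P _ S, Finset.sum_congr rfl fun s'' _ => hterm s'', ← Finset.sum_mul,
    ← Finset.sum_mul, ← hV, mul_comm (pr P _)]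

end Mixture

lemma pr_true_and_mixture {Ω 𝕊 𝕍 : Type} [Fintype Ω] (P : Ω → ℝ) (S : Ω → 𝕊) (V : Ω → 𝕍)
    (St : Ω → 𝕊) (M : Ω → Bool) (Sbar : Ω → 𝕊)
    (hSbar : ∀ ω, Sbar ω = if M ω then S ω else St ω) (s : 𝕊) (v : 𝕍) :
    pr P (fun ω => M ω = true ∧ Sbar ω = s ∧ V ω = v) =
      pr P (fun ω => M ω = true ∧ S ω = s ∧ V ω = v) :=
  pr_congr P fun ω => by rw [hSbar ω]; cases M ω <;> simp

lemma pr_false_and_mixture {Ω 𝕊 𝕍 : Type} [Fintype Ω] (P : Ω → ℝ) (S : Ω → 𝕊) (V : Ω → 𝕍)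
    (St : Ω → 𝕊) (M : Ω → Bool) (Sbar : Ω → 𝕊)
    (hSbar : ∀ ω, Sbar ω = if M ω then S ω else St ω) (s : 𝕊) (v : 𝕍) :
    pr P (fun ω => M ω = false ∧ Sbar ω = s ∧ V ω = v) =
      pr P (fun ω => M ω = false ∧ St ω = s ∧ V ω = v) :=
  pr_congr P fun ω => by rw [hSbar ω]; cases M ω <;> simp

theorem likelihood_ratio_via_binary_classification_general
    {Ω 𝕊 𝕍 : Type} [Fintype Ω] [Fintype 𝕊]
    (P : Ω → ℝ) (hP : ∀ ω, 0 ≤ P ω)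
    (S : Ω → 𝕊) (V : Ω → 𝕍) (St : Ω → 𝕊) (M : Ω → Bool)
    (hindep : ∀ (s : 𝕊) (v : 𝕍) (s' : 𝕊) (m : Bool),
      pr P (fun ω => S ω = s ∧ V ω = v ∧ St ω = s' ∧ M ω = m) =
        pr P (fun ω => S ω = s ∧ V ω = v) * pr P (fun ω => St ω = s') *
          pr P (fun ω => M ω = m))
    (hunif : ∀ s' : 𝕊, pr P (fun ω => St ω = s') = 1 / (Fintype.card 𝕊 : ℝ))
    (hM1 : pr P (fun ω => M ω = true) = 1 / 2)
    (hM0 : pr P (fun ω => M ω = false) = 1 / 2)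
    (Sbar : Ω → 𝕊) (hSbar : ∀ ω, Sbar ω = if M ω then S ω else St ω) :
    ∀ (s : 𝕊) (v : 𝕍), 0 < pr P (fun ω => S ω = s ∧ V ω = v) →
      0 < pr P (fun ω => Sbar ω = s ∧ V ω = v) ∧
      condPr P (fun ω => M ω = true) (fun ω => Sbar ω = s ∧ V ω = v) ∈
        Set.Ioo (0 : ℝ) 1 ∧
      condPr P (fun ω => M ω = false) (fun ω => Sbar ω = s ∧ V ω = v) ∈
        Set.Ioo (0 : ℝ) 1 ∧
      Real.log (pr P (fun ω => S ω = s ∧ V ω = v) /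
          ((1 / (Fintype.card 𝕊 : ℝ)) * pr P (fun ω => V ω = v))) =
        Real.log (condPr P (fun ω => M ω = true) (fun ω => Sbar ω = s ∧ V ω = v) /
          condPr P (fun ω => M ω = false) (fun ω => Sbar ω = s ∧ V ω = v)) := by
  intro s v hSV
  have : Nonempty 𝕊 := ⟨s⟩
  have hTrue : pr P (fun ω => M ω = true ∧ Sbar ω = s ∧ V ω = v) =
      pr P (fun ω => S ω = s ∧ V ω = v) * (1 / 2) := by
    rw [pr_true_and_mixture P S V St M Sbar hSbar,
      pr_and_eq_mul_of_indep P S V St M hindep hunif, hM1]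
  have hFalse : pr P (fun ω => M ω = false ∧ Sbar ω = s ∧ V ω = v) =
      (1 / (Fintype.card 𝕊 : ℝ) * pr P (fun ω => V ω = v)) * (1 / 2) := by
    rw [pr_false_and_mixture P S V St M Sbar hSbar,
      pr_uniform_and_eq_mul_of_indep P S V St M hindep hunif, hM0]
  have hVpos : 0 < 1 / (Fintype.card 𝕊 : ℝ) * pr P (fun ω => V ω = v) :=
    mul_pos (by simp [Fintype.card_pos]) (hSV.trans_le (pr_mono P hP fun ω h => h.2))
  have hsum := pr_eq_add_bool P M (fun ω => Sbar ω = s ∧ V ω = v)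
  have hpos : 0 < pr P (fun ω => Sbar ω = s ∧ V ω = v) := by
    rw [hsum, hTrue, hFalse]; positivity
  refine ⟨hpos, condPr_mem_Ioo P hsum (by rw [hTrue]; positivity) (by rw [hFalse]; positivity),
    condPr_mem_Ioo P (hsum.trans (add_comm _ _)) (by rw [hFalse]; positivity)
      (by rw [hTrue]; positivity), ?_⟩
  rw [condPr_div_condPr P _ _ _ hpos.ne', hTrue, hFalse, mul_div_mul_right _ _ (by norm_num)]

/-- Likelihood ratio via binary classification: if `(S, V)`,
`S̃`, `M` are mutually independent, `S̃` is uniform on `𝕊` (of cardinality `m`),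
`P(M = 1) = P(M = 0) = 1/2`, and `S̄ = S` on `{M = 1}`, `S̄ = S̃` on `{M = 0}`,
then for every `(s, v)` with `P(S = s, V = v) > 0` the conditional
probabilities `P(M = 1 | S̄ = s, V = v)` and `P(M = 0 | S̄ = s, V = v)` are
well-defined and lie in `(0,1)`, and
`log( P(S = s, V = v) / ((1/m) · P(V = v)) )
  = log( P(M = 1 | S̄ = s, V = v) / P(M = 0 | S̄ = s, V = v) )`. -/
theorem likelihood_ratio_via_binary_classification
    {Ω 𝕊 𝕍 : Type} [Fintype Ω] [Nonempty Ω] [Fintype 𝕊] [Nonempty 𝕊]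
    [Fintype 𝕍] [Nonempty 𝕍]
    (P : Ω → ℝ) (hP : ∀ ω, 0 ≤ P ω) (hPsum : ∑ ω, P ω = 1)
    (S : Ω → 𝕊) (V : Ω → 𝕍) (St : Ω → 𝕊) (M : Ω → Bool)
    (hindep : ∀ (s : 𝕊) (v : 𝕍) (s' : 𝕊) (m : Bool),
      pr P (fun ω => S ω = s ∧ V ω = v ∧ St ω = s' ∧ M ω = m) =
        pr P (fun ω => S ω = s ∧ V ω = v) * pr P (fun ω => St ω = s') *
          pr P (fun ω => M ω = m))
    (hunif : ∀ s' : 𝕊, pr P (fun ω => St ω = s') = 1 / (Fintype.card 𝕊 : ℝ))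
    (hM1 : pr P (fun ω => M ω = true) = 1 / 2)
    (hM0 : pr P (fun ω => M ω = false) = 1 / 2)
    (Sbar : Ω → 𝕊) (hSbar : ∀ ω, Sbar ω = if M ω then S ω else St ω) :
    ∀ (s : 𝕊) (v : 𝕍), 0 < pr P (fun ω => S ω = s ∧ V ω = v) →
      0 < pr P (fun ω => Sbar ω = s ∧ V ω = v) ∧
      condPr P (fun ω => M ω = true) (fun ω => Sbar ω = s ∧ V ω = v) ∈
        Set.Ioo (0 : ℝ) 1 ∧
      condPr P (fun ω => M ω = false) (fun ω => Sbar ω = s ∧ V ω = v) ∈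
        Set.Ioo (0 : ℝ) 1 ∧
      Real.log (pr P (fun ω => S ω = s ∧ V ω = v) /
          ((1 / (Fintype.card 𝕊 : ℝ)) * pr P (fun ω => V ω = v))) =
        Real.log (condPr P (fun ω => M ω = true) (fun ω => Sbar ω = s ∧ V ω = v) /
          condPr P (fun ω => M ω = false) (fun ω => Sbar ω = s ∧ V ω = v)) :=
  likelihood_ratio_via_binary_classification_general P hP S V St M hindep hunif hM1 hM0 Sbar hSbar

end NCS
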